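/- Assume λ₂ = 0 and define a_n = k_n/k̂_{n-1}. Then for all n ≥ 1, c_{n+2} c_{n+1} / a_{n+2} + a_n = c_{n+1} + c_n, where c_n are the Freud recurrence coefficients. -/

import Mathlib

open Polynomial MeasureTheory Filter Topology

/-- The Freud inner product `⟨f,g⟩_F = ∫_ℝ f(x) g(x) e^{-x⁴} dx`. -/
noncomputable def innerF (f g : Polynomial ℝ) : ℝ :=
  ∫ x : ℝ, f.eval x * g.eval x * Real.exp (-x ^ 4)


/-- The Sobolev inner product
`⟨f,g⟩_S = ⟨f,g⟩_F + λ₁ f(0) g(0) + λ₂ f'(0) g'(0)`. -/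
noncomputable def innerS (l1 l2 : ℝ) (f g : Polynomial ℝ) : ℝ :=
  innerF f g + l1 * f.eval 0 * g.eval 0
    + l2 * (Polynomial.derivative f).eval 0 * (Polynomial.derivative g).eval 0

/-!
Both inner products are moment functionals applied to `f * g`: `L` for the Freud weight and
`L + λ₁ δ₀` for the Sobolev one. Expanding `Q_n - P_n` in the `P_j` gives
`Q_n(0) (1 + λ₁ K_n) = P_n(0)` with `K_n = ∑_{j<n} P_j(0)² / k_j`, hence
`k̂_n (1 + λ₁ K_n) = k_n (1 + λ₁ K_{n+1})`. Together with `k_{n+1} = c_{n+1} k_n` and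
`P_{n+2}(0) = -c_{n+1} P_n(0)` the identity reduces to `P_n(0)² (K_{n+2} - K_{n+1}) = 0`,
which holds because `P_n(0)` vanishes for odd `n`.
-/

theorem Polynomial.Monic.degree_sub_lt_of_natDegree_eq {R : Type*} [Ring R] [Nontrivial R]
    {p q : R[X]} {n : ℕ} (hp : p.Monic) (hq : q.Monic) (hpn : p.natDegree = n)
    (hqn : q.natDegree = n) : (p - q).degree < n := by
  have hdeg : p.degree = q.degree := by
    rw [degree_eq_natDegree hp.ne_zero, degree_eq_natDegree hq.ne_zero, hpn, hqn]
  simpa [degree_eq_natDegree hp.ne_zero, hpn] using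
    degree_sub_lt_left hdeg hp.ne_zero (by rw [hp.leadingCoeff, hq.leadingCoeff])

section MonicOrthogonal

variable {K : Type*} [Field K]

structure IsMonicOrthogonal (L : K[X] →ₗ[K] K) (p : ℕ → K[X]) : Prop where
  monic : ∀ n, (p n).Monic
  natDegree_eq : ∀ n, (p n).natDegree = n
  map_mul_X_pow : ∀ n m, m < n → L (p n * X ^ m) = 0

namespace IsMonicOrthogonal

variable {L : K[X] →ₗ[K] K} {p : ℕ → K[X]}

theorem degree_eq (hp : IsMonicOrthogonal L p) (n : ℕ) : (p n).degree = n := by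
  rw [degree_eq_natDegree (hp.monic n).ne_zero, hp.natDegree_eq]

theorem map_mul_eq_zero (hp : IsMonicOrthogonal L p) {n : ℕ} {q : K[X]} (hq : q.degree < n) :
    L (p n * q) = 0 := by
  classical
  have hle : degreeLT K n ≤ LinearMap.ker (L ∘ₗ LinearMap.mulLeft K (p n)) := by
    rw [degreeLT_eq_span_X_pow, Submodule.span_le]
    intro f hf
    obtain ⟨m, hm, rfl⟩ := Finset.mem_image.mp hf
    exact hp.map_mul_X_pow n m (Finset.mem_range.mp hm)
  exact hle (mem_degreeLT.mpr hq)

theorem map_mul_eq_zero_of_lt (hp : IsMonicOrthogonal L p) {i j : ℕ} (hij : i < j) :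
    L (p j * p i) = 0 :=
  hp.map_mul_eq_zero (by rw [hp.degree_eq]; exact_mod_cast hij)

theorem map_mul_eq_zero_of_ne (hp : IsMonicOrthogonal L p) {i j : ℕ} (hij : i ≠ j) :
    L (p i * p j) = 0 := by
  rcases hij.lt_or_gt with h | h
  · rw [mul_comm]; exact hp.map_mul_eq_zero_of_lt h
  · exact hp.map_mul_eq_zero_of_lt h

theorem map_mul_monic (hp : IsMonicOrthogonal L p) {n : ℕ} {f : K[X]} (hf : f.Monic)
    (hfn : f.natDegree = n) : L (p n * f) = L (p n * p n) := by
  have hlt := hf.degree_sub_lt_of_natDegree_eq (hp.monic n) hfn (hp.natDegree_eq n)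
  rw [← sub_eq_zero, ← map_sub, ← mul_sub, hp.map_mul_eq_zero hlt]

theorem map_mul_self_succ (hp : IsMonicOrthogonal L p) {n : ℕ} {c : K}
    (hrec : X * p (n + 1) = p (n + 2) + C c * p n) :
    L (p (n + 1) * p (n + 1)) = c * L (p n * p n) := by
  have hXp : (X * p n).Monic := monic_X.mul (hp.monic n)
  calc L (p (n + 1) * p (n + 1)) = L (p (n + 1) * (X * p n)) :=
        (hp.map_mul_monic hXp (by rw [natDegree_X_mul (hp.monic n).ne_zero, hp.natDegree_eq])).symm
    _ = L ((X * p (n + 1)) * p n) := by ring_nf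
    _ = c * L (p n * p n) := by
        rw [hrec, add_mul, map_add, hp.map_mul_eq_zero_of_lt (by omega), mul_assoc,
          ← smul_eq_C_mul, map_smul, smul_eq_mul, zero_add]

theorem eq_sum_of_degree_lt (hp : IsMonicOrthogonal L p) (hL : ∀ n, L (p n * p n) ≠ 0)
    {d : ℕ} {q : K[X]} (hq : q.degree < d) :
    q = ∑ j ∈ Finset.range d, (L (q * p j) / L (p j * p j)) • p j := by
  induction d generalizing q with
  | zero => simp_all
  | succ d ih =>
    set r := q - q.coeff d • p d
    have hr : r.degree < d := by
      rw [degree_lt_iff_coeff_zero]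
      intro m hm
      rcases hm.eq_or_lt with rfl | hm
      · simp [r, hp.natDegree_eq d ▸ (hp.monic d).coeff_natDegree]
      · simp [r, coeff_eq_zero_of_degree_lt (hq.trans_le (by exact_mod_cast hm)),
          coeff_eq_zero_of_natDegree_lt ((hp.natDegree_eq d).trans_lt hm)]
    have hcoeff : ∀ j, L (q * p j) = L (r * p j) + q.coeff d * L (p d * p j) := by
      intro j; simp [r, sub_mul]
    have hlead : L (q * p d) / L (p d * p d) = q.coeff d := by
      rw [hcoeff, mul_comm r, hp.map_mul_eq_zero hr, zero_add, mul_div_cancel_right₀ _ (hL d)]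
    have hlower : ∀ j ∈ Finset.range d, L (r * p j) = L (q * p j) := fun j hj => by
      rw [hcoeff, hp.map_mul_eq_zero_of_ne (Finset.mem_range.mp hj).ne', mul_zero, add_zero]
    calc q = r + q.coeff d • p d := (sub_add_cancel _ _).symm
      _ = _ := by
        rw [ih hr, Finset.sum_range_succ, hlead, Finset.sum_congr rfl fun j hj => by
          rw [hlower j hj]]

end IsMonicOrthogonal

section PointMass

variable {L : K[X] →ₗ[K] K} {P Q : ℕ → K[X]} {a l : K}

/-- `K_{n-1}(a, a)` in the usual indexing of the Christoffel–Darboux kernel. -/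
noncomputable def christoffelDarboux (L : K[X] →ₗ[K] K) (p : ℕ → K[X]) (a : K) (n : ℕ) : K :=
  ∑ j ∈ Finset.range n, (p j).eval a ^ 2 / L (p j * p j)

theorem christoffelDarboux_succ (L : K[X] →ₗ[K] K) (p : ℕ → K[X]) (a : K) (n : ℕ) :
    christoffelDarboux L p a (n + 1) =
      christoffelDarboux L p a n + (p n).eval a ^ 2 / L (p n * p n) :=
  Finset.sum_range_succ _ _

theorem one_add_mul_christoffelDarboux_pos [LinearOrder K] [IsStrictOrderedRing K] (hl : 0 ≤ l)
    (hL : ∀ n, 0 ≤ L (P n * P n)) (n : ℕ) : 0 < 1 + l * christoffelDarboux L P a n := by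
  have : 0 ≤ christoffelDarboux L P a n :=
    Finset.sum_nonneg fun j _ => div_nonneg (sq_nonneg _) (hL j)
  positivity

theorem IsMonicOrthogonal.map_mul_self_of_add_point_mass (hP : IsMonicOrthogonal L P)
    (hQ : IsMonicOrthogonal (L + l • leval a) Q) (n : ℕ) :
    (L + l • leval a) (Q n * Q n) = L (P n * P n) + l * ((Q n).eval a * (P n).eval a) := by
  rw [← hQ.map_mul_monic (hP.monic n) (hP.natDegree_eq n), mul_comm (Q n),
    ← hP.map_mul_monic (hQ.monic n) (hQ.natDegree_eq n)]
  simp [mul_comm]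

theorem IsMonicOrthogonal.eval_mul_one_add_christoffelDarboux (hP : IsMonicOrthogonal L P)
    (hQ : IsMonicOrthogonal (L + l • leval a) Q) (hL : ∀ n, L (P n * P n) ≠ 0) (n : ℕ) :
    (Q n).eval a * (1 + l * christoffelDarboux L P a n) = (P n).eval a := by
  have hlt := (hQ.monic n).degree_sub_lt_of_natDegree_eq (hP.monic n) (hQ.natDegree_eq n)
    (hP.natDegree_eq n)
  have hcoeff : ∀ j ∈ Finset.range n,
      L ((Q n - P n) * P j) = -(l * ((Q n).eval a * (P j).eval a)) := by
    intro j hj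
    have hQj := hQ.map_mul_eq_zero (q := P j)
      (by rw [hP.degree_eq]; exact_mod_cast Finset.mem_range.mp hj)
    have hPj := hP.map_mul_eq_zero_of_ne (Finset.mem_range.mp hj).ne'
    simp only [LinearMap.add_apply, LinearMap.smul_apply, leval_apply, eval_mul,
      smul_eq_mul] at hQj
    rw [sub_mul, map_sub, hPj]
    linear_combination hQj
  have heval := congrArg (eval a) (hP.eq_sum_of_degree_lt hL hlt)
  have hsum : ∑ j ∈ Finset.range n, (L ((Q n - P n) * P j) / L (P j * P j)) • (P j).eval a =
      -((Q n).eval a * (l * christoffelDarboux L P a n)) := by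
    rw [christoffelDarboux, Finset.mul_sum, Finset.mul_sum, ← Finset.sum_neg_distrib]
    refine Finset.sum_congr rfl fun j hj => ?_
    rw [hcoeff j hj, smul_eq_mul]
    ring
  rw [eval_sub, eval_finsetSum] at heval
  simp only [eval_smul] at heval
  linear_combination heval + hsum

theorem IsMonicOrthogonal.map_mul_self_mul_one_add_christoffelDarboux
    (hP : IsMonicOrthogonal L P) (hQ : IsMonicOrthogonal (L + l • leval a) Q)
    (hL : ∀ n, L (P n * P n) ≠ 0) (n : ℕ) :
    (L + l • leval a) (Q n * Q n) * (1 + l * christoffelDarboux L P a n) =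
      L (P n * P n) * (1 + l * christoffelDarboux L P a (n + 1)) := by
  have heval := hP.eval_mul_one_add_christoffelDarboux hQ hL n
  rw [hP.map_mul_self_of_add_point_mass hQ, christoffelDarboux_succ]
  field_simp [hL n]
  linear_combination (l * (P n).eval a) * heval

end PointMass

section Freud

open Real Set

theorem integrable_pow_mul_exp_neg_pow_four (n : ℕ) :
    Integrable fun x : ℝ => x ^ n * exp (-x ^ 4) := by
  have hIoi : IntegrableOn (fun x : ℝ => |x| ^ n * exp (-x ^ 4)) (Ioi 0) := by
    refine (integrableOn_rpow_mul_exp_neg_rpow (p := 4) (s := n)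
      (neg_one_lt_zero.trans_le n.cast_nonneg) (by norm_num)).congr_fun (fun x hx => ?_)
      measurableSet_Ioi
    rw [abs_of_pos hx, ← rpow_natCast x n, ← rpow_natCast x 4, Nat.cast_ofNat]
  have habs : Integrable fun x : ℝ => |x| ^ n * exp (-x ^ 4) := by
    rw [← integrableOn_univ, ← Iio_union_Ici (a := (0 : ℝ)), integrableOn_union,
      integrableOn_Ici_iff_integrableOn_Ioi]
    refine ⟨?_, hIoi⟩
    rw [← (Measure.measurePreserving_neg (volume : Measure ℝ)).integrableOn_comp_preimage
      (Homeomorph.neg ℝ).measurableEmbedding]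
    simpa only [Function.comp_def, neg_preimage, neg_Iio, neg_zero, abs_neg, Even.neg_pow
      (by decide : Even 4)] using hIoi
  refine habs.mono' (by fun_prop) (ae_of_all _ fun x => ?_)
  rw [norm_mul, norm_pow, norm_eq_abs, norm_of_nonneg (exp_pos _).le]

theorem integrable_eval_mul_exp_neg_pow_four (f : ℝ[X]) :
    Integrable fun x : ℝ => f.eval x * exp (-x ^ 4) := by
  induction f using Polynomial.induction_on' with
  | add p q hp hq => exact (hp.add hq).congr (ae_of_all _ fun x => by simp [add_mul])
  | monomial n c =>
    simpa only [eval_monomial, mul_assoc] using (integrable_pow_mul_exp_neg_pow_four n).const_mul c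

noncomputable def freudMoment : ℝ[X] →ₗ[ℝ] ℝ where
  toFun f := ∫ x, f.eval x * exp (-x ^ 4)
  map_add' f g := by
    simp only [eval_add, add_mul]
    exact integral_add (integrable_eval_mul_exp_neg_pow_four f)
      (integrable_eval_mul_exp_neg_pow_four g)
  map_smul' r f := by
    simp only [eval_smul, smul_eq_mul, mul_assoc, RingHom.id_apply]
    exact integral_const_mul r _

theorem innerF_eq_freudMoment (f g : ℝ[X]) : innerF f g = freudMoment (f * g) := by
  simp [innerF, freudMoment]

theorem innerS_zero_eq_freudMoment_add (l : ℝ) (f g : ℝ[X]) :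
    innerS l 0 f g = (freudMoment + l • leval (0 : ℝ) : ℝ[X] →ₗ[ℝ] ℝ) (f * g) := by
  simp [innerS, innerF_eq_freudMoment, mul_assoc]

theorem freudMoment_mul_self_pos {f : ℝ[X]} (hf : f ≠ 0) : 0 < freudMoment (f * f) := by
  obtain ⟨x, hx⟩ : ∃ x, f.eval x ≠ 0 := by
    by_contra! h
    exact hf (Polynomial.funext fun x => by simp [h x])
  have hnonneg : ∀ y, 0 ≤ (f * f).eval y * exp (-y ^ 4) := fun y =>
    mul_nonneg (by simpa only [eval_mul] using mul_self_nonneg _) (exp_pos _).le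
  refine integral_pos_of_integrable_nonneg_nonzero (x := x) (by fun_prop)
    (integrable_eval_mul_exp_neg_pow_four _) hnonneg ?_
  simp only [eval_mul]
  positivity

end Freud

theorem mul_apply_succ_eq_zero {R : Type*} [CommMonoidWithZero R] {u f : ℕ → R} (h1 : u 1 = 0)
    (h : ∀ n, u (n + 2) = f n * u n) (n : ℕ) : u n * u (n + 1) = 0 := by
  induction n with
  | zero => rw [h1, mul_zero]
  | succ n ih => rw [h, mul_left_comm, mul_comm (u (n + 1)), ih, mul_zero]

theorem mul_div_div_add_div_eq_add_of_recurrences {k c p s kh : ℕ → ℝ} {l : ℝ} (m : ℕ)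
    (hk : ∀ j, k (j + 1) = c (j + 1) * k j) (hkpos : ∀ j, 0 < k j)
    (hs : ∀ j, s (j + 1) = s j + l * (p j ^ 2 / k j)) (hspos : ∀ j, 0 < s j)
    (hkh : ∀ j, kh j * s j = k j * s (j + 1))
    (hp : p (m + 2) = -c (m + 1) * p m) (hpp : p m * p (m + 1) = 0) :
    c (m + 3) * c (m + 2) / (k (m + 3) / kh (m + 2)) + k (m + 1) / kh m =
      c (m + 2) + c (m + 1) := by
  have hc : ∀ j, c (j + 1) ≠ 0 := fun j h => (hkpos (j + 1)).ne' (by rw [hk, h, zero_mul])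
  have hkh' : ∀ j, kh j = k j * s (j + 1) / s j := fun j => by
    rw [eq_div_iff (hspos j).ne', hkh]
  have hinc : ∀ j, s (j + 1) - s j = l * (p j ^ 2 / k j) := fun j => sub_eq_iff_eq_add'.mpr (hs j)
  have hk0 := (hkpos m).ne'
  have hs1 := (hspos (m + 1)).ne'
  have hs2 := (hspos (m + 2)).ne'
  have hfirst :
      c (m + 3) * c (m + 2) / (k (m + 3) / kh (m + 2)) = c (m + 2) * s (m + 3) / s (m + 2) := by
    rw [hkh', hk (m + 2)]
    field_simp [hc (m + 2), (hkpos (m + 2)).ne', (hspos (m + 3)).ne']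
  have hsecond : k (m + 1) / kh m = c (m + 1) * s m / s (m + 1) := by
    rw [hkh', hk m]
    field_simp [(hspos m).ne']
  have hD : c (m + 2) * (s (m + 3) - s (m + 2)) = c (m + 1) * (s (m + 1) - s m) := by
    rw [hinc, hinc, hp, hk (m + 1), hk m]
    field_simp [hc m, hc (m + 1)]
  have hflat : (s (m + 1) - s m) * (s (m + 2) - s (m + 1)) = 0 := by
    rw [hinc, hinc, hk m]
    field_simp [hc m]
    linear_combination (l ^ 2 * p m * p (m + 1)) * hpp
  rw [hfirst, hsecond]
  field_simp
  linear_combination s (m + 1) * hD - c (m + 1) * hflat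

theorem sobolev_freud_a_identity_general
    (l1 : ℝ) (hl1 : 0 ≤ l1)
    (P Q : ℕ → Polynomial ℝ) (k khat : ℕ → ℝ)
    (hPmonic : ∀ n, (P n).Monic) (hPdeg : ∀ n, (P n).natDegree = n)
    (hPorth : ∀ n m : ℕ, m < n → innerF (P n) (X ^ m) = 0)
    (hQmonic : ∀ n, (Q n).Monic) (hQdeg : ∀ n, (Q n).natDegree = n)
    (hQorth : ∀ n m : ℕ, m < n → innerS l1 0 (Q n) (X ^ m) = 0)
    (hk : ∀ n, k n = innerF (P n) (P n))
    (hkhat : ∀ n, khat n = innerS l1 0 (Q n) (Q n))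
    (c : ℕ → ℝ) (hP1 : P 1 = X)
    (hrec : ∀ n, 1 ≤ n → X * P n = P (n + 1) + C (c n) * P (n - 1))
    (a : ℕ → ℝ) (ha : ∀ n, a n = k n / khat (n - 1)) :
    ∀ n, 1 ≤ n → c (n + 2) * c (n + 1) / a (n + 2) + a n = c (n + 1) + c n := by
  obtain rfl : k = fun n => freudMoment (P n * P n) :=
    funext fun n => by rw [hk, innerF_eq_freudMoment]
  obtain rfl : khat = fun n => (freudMoment + l1 • leval (0 : ℝ)) (Q n * Q n) :=
    funext fun n => by rw [hkhat, innerS_zero_eq_freudMoment_add]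
  have hP : IsMonicOrthogonal freudMoment P :=
    ⟨hPmonic, hPdeg, fun n m hm => innerF_eq_freudMoment _ _ ▸ hPorth n m hm⟩
  have hQ : IsMonicOrthogonal (freudMoment + l1 • leval (0 : ℝ)) Q :=
    ⟨hQmonic, hQdeg, fun n m hm => innerS_zero_eq_freudMoment_add l1 _ _ ▸ hQorth n m hm⟩
  have hkpos : ∀ n, 0 < freudMoment (P n * P n) :=
    fun n => freudMoment_mul_self_pos (hPmonic n).ne_zero
  have hrec' : ∀ j, X * P (j + 1) = P (j + 2) + C (c (j + 1)) * P j :=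
    fun j => hrec (j + 1) j.succ_pos
  have heval : ∀ j, (P (j + 2)).eval 0 = -c (j + 1) * (P j).eval 0 := fun j => by
    simpa [eq_neg_iff_add_eq_zero] using (congrArg (eval 0) (hrec' j)).symm
  intro n hn
  obtain ⟨m, rfl⟩ := Nat.exists_eq_add_of_le' hn
  rw [ha, ha]
  exact mul_div_div_add_div_eq_add_of_recurrences
    (p := fun j => (P j).eval 0) (s := fun j => 1 + l1 * christoffelDarboux freudMoment P 0 j) m
    (fun j => hP.map_mul_self_succ (hrec' j)) hkpos
    (fun j => by simp only [christoffelDarboux_succ]; ring)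
    (one_add_mul_christoffelDarboux_pos hl1 fun i => (hkpos i).le)
    (hP.map_mul_self_mul_one_add_christoffelDarboux hQ fun i => (hkpos i).ne')
    (heval m) (mul_apply_succ_eq_zero (u := fun j => (P j).eval 0) (by simp [hP1]) heval m)

/-- Case `λ₂ = 0`: with `a n = k n / k̂ (n-1)` and `c n` the Freud recurrence
coefficients, `c_{n+2} c_{n+1} / a_{n+2} + a_n = c_{n+1} + c_n` for all `n ≥ 1`. -/
theorem sobolev_freud_a_identity
    (l1 : ℝ) (hl1 : 0 ≤ l1)
    (P Q : ℕ → Polynomial ℝ) (k khat : ℕ → ℝ)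
    (hPmonic : ∀ n, (P n).Monic) (hPdeg : ∀ n, (P n).natDegree = n)
    (hPorth : ∀ n m : ℕ, m < n → innerF (P n) (X ^ m) = 0)
    (hQmonic : ∀ n, (Q n).Monic) (hQdeg : ∀ n, (Q n).natDegree = n)
    (hQorth : ∀ n m : ℕ, m < n → innerS l1 0 (Q n) (X ^ m) = 0)
    (hk : ∀ n, k n = innerF (P n) (P n))
    (hkhat : ∀ n, khat n = innerS l1 0 (Q n) (Q n))
    (c : ℕ → ℝ) (hP0 : P 0 = 1) (hP1 : P 1 = X)
    (hrec : ∀ n, 1 ≤ n → X * P n = P (n + 1) + C (c n) * P (n - 1))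
    (a : ℕ → ℝ) (ha : ∀ n, a n = k n / khat (n - 1)) :
    ∀ n, 1 ≤ n → c (n + 2) * c (n + 1) / a (n + 2) + a n = c (n + 1) + c n :=
  sobolev_freud_a_identity_general l1 hl1 P Q k khat hPmonic hPdeg hPorth hQmonic hQdeg hQorth hk
    hkhat c hP1 hrec a ha
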